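/- Let 𝒟 be a dyadic grid on ℝⁿ, let r ≥ 3 and τ ≥ 1 be integers, let 1/r < ε < 1 − 1/r, and suppose 0 < δ ≤ (rε − 1)/(r + τ). Then every (r−1, δ)-good dyadic cube I belongs to 𝒟^τ_{(r,ε)-good}; that is, every dyadic child of I is (r,ε)-good, and the ℓ-fold dyadic parents π^{(ℓ)}I are (r,ε)-good for all 0 ≤ ℓ ≤ τ. -/

import Mathlib

/-!
Children and ancestors of `I` are compared with a large dyadic `K` through `I` itself: dyadic
nesting gives `I ⊆ K` with `ℓ(I) ≤ 2^{1-r} ℓ(K)`, so the `(r-1, δ)`-goodness of `I` keeps `I` at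
distance `½ ℓ(I)^δ ℓ(K)^{1-δ}` from `ℝⁿ ∖ K`. For a child `J` this already dominates
`½ ℓ(J)^ε ℓ(K)^{1-ε}` since `δ ≤ ε`. For an ancestor `P = π^{(ℓ)} I` one loses at most `ℓ(P)` in a
single coordinate, and `(r + ℓ) δ + 1 ≤ r ε`, `(r + ℓ) δ + 2 ≤ r` are exactly what make
`½ ℓ(P)^ε ℓ(K)^{1-ε} + ℓ(P)` fit under that distance, half of it each.
-/

open MeasureTheory
open scoped ENNReal NNReal

noncomputable section

/-- An axis-parallel half-open cube in `ℝⁿ`, given by its corner `a` and side length `l`. -/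
structure QCube (n : ℕ) where
  a : Fin n → ℝ
  l : ℝ

/-- The half-open cube as a subset of `ℝⁿ`. -/
def QCube.pts {n : ℕ} (Q : QCube n) : Set (EuclideanSpace ℝ (Fin n)) :=
  {x | ∀ i, Q.a i ≤ x i ∧ x i < Q.a i + Q.l}

/-- The dyadic grid on `ℝⁿ` obtained by translating the standard grid by `t`. -/
def dyadicGrid {n : ℕ} (t : Fin n → ℝ) : Set (QCube n) :=
  {Q | ∃ (k : ℤ) (m : Fin n → ℤ),
    Q = ⟨fun i => t i + (2:ℝ) ^ (-k) * (m i : ℝ), (2:ℝ) ^ (-k)⟩}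

/-- `J ⋐_{r,ε} K` : `J` is `(r,ε)`-deeply embedded in `K`. -/
def deepEmb {n : ℕ} (r : ℕ) (ε : ℝ) (J K : QCube n) : Prop :=
  J.pts ⊆ K.pts ∧ J.l ≤ 2 ^ (-(r : ℝ)) * K.l ∧
    ∀ x ∈ J.pts, ∀ y ∉ K.pts, 1 / 2 * J.l ^ ε * K.l ^ (1 - ε) ≤ dist x y

/-- A dyadic cube `J` of the grid `t` is `(r,ε)`-good if `J ⋐_{r,ε} I` for every dyadic
cube `I ⊇ J` with `ℓ(J) ≤ 2^{−r} ℓ(I)`. -/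
def isGood {n : ℕ} (t : Fin n → ℝ) (r : ℕ) (ε : ℝ) (J : QCube n) : Prop :=
  ∀ I ∈ dyadicGrid t, J.pts ⊆ I.pts → J.l ≤ 2 ^ (-(r : ℝ)) * I.l → deepEmb r ε J I

namespace QCube

variable {n : ℕ}

theorem mem_pts {Q : QCube n} {x : EuclideanSpace ℝ (Fin n)} :
    x ∈ Q.pts ↔ ∀ i, x i ∈ Set.Ico (Q.a i) (Q.a i + Q.l) :=
  Iff.rfl

theorem corner_mem_pts {Q : QCube n} (hQ : 0 < Q.l) : WithLp.toLp 2 Q.a ∈ Q.pts :=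
  fun i => ⟨le_rfl, lt_add_of_pos_right _ hQ⟩

theorem abs_sub_lt_of_mem_pts {Q : QCube n} {x y : EuclideanSpace ℝ (Fin n)}
    (hx : x ∈ Q.pts) (hy : y ∈ Q.pts) (i : Fin n) : |x i - y i| < Q.l := by
  obtain ⟨hx₁, hx₂⟩ := hx i
  obtain ⟨hy₁, hy₂⟩ := hy i
  rw [abs_sub_lt_iff]
  constructor <;> linarith

-- Test `h` on the point obtained from `p` by moving one coordinate in which `y` leaves `Q` to `y i`.
theorem exists_le_abs_sub_of_forall_le_dist {Q : QCube n} {p y : EuclideanSpace ℝ (Fin n)}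
    {c : ℝ} (h : ∀ z ∉ Q.pts, c ≤ dist p z) (hy : y ∉ Q.pts) : ∃ i, c ≤ |p i - y i| := by
  obtain ⟨i, hi⟩ : ∃ i, y i ∉ Set.Ico (Q.a i) (Q.a i + Q.l) := by
    simpa [mem_pts] using hy
  set z := p - PiLp.single 2 i (p i - y i)
  have hzi : z i = y i := by simp [z]
  have hz : z ∉ Q.pts := fun hz => hi (hzi ▸ hz i)
  refine ⟨i, ?_⟩
  simpa [dist_eq_norm, z, Real.norm_eq_abs] using h z hz

end QCube

theorem dyadicGrid.l_pos {n : ℕ} {t : Fin n → ℝ} {Q : QCube n} (hQ : Q ∈ dyadicGrid t) :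
    0 < Q.l := by
  obtain ⟨k, m, rfl⟩ := hQ
  exact zpow_pos two_pos _

theorem Ico_subset_Ico_of_mem_dyadic {t s x : ℝ} {D m m' : ℤ} (hs : 0 < s)
    (hx : x ∈ Set.Ico (t + s * m) (t + s * m + s))
    (hx' : x ∈ Set.Ico (t + s * D * m') (t + s * D * m' + s * D)) :
    Set.Ico (t + s * m) (t + s * m + s) ⊆ Set.Ico (t + s * D * m') (t + s * D * m' + s * D) := by
  have hlow : D * m' ≤ m := by
    have : s * (D * m') < s * (m + 1) := by linarith [hx.2, hx'.1]
    exact Int.lt_add_one_iff.mp (by exact_mod_cast lt_of_mul_lt_mul_left this hs.le)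
  have hhigh : m + 1 ≤ D * m' + D := by
    have : s * m < s * (D * m' + D) := by linarith [hx.1, hx'.2]
    exact Int.add_one_le_iff.mpr (by exact_mod_cast lt_of_mul_lt_mul_left this hs.le)
  apply Set.Ico_subset_Ico
  · have := mul_le_mul_of_nonneg_left (show (D * m' : ℝ) ≤ m by exact_mod_cast hlow) hs.le
    linarith
  · have := mul_le_mul_of_nonneg_left (show (m + 1 : ℝ) ≤ D * m' + D by exact_mod_cast hhigh) hs.le
    linarith

theorem dyadicGrid.pts_subset_of_le {n : ℕ} {t : Fin n → ℝ} {Q Q' : QCube n}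
    (hQ : Q ∈ dyadicGrid t) (hQ' : Q' ∈ dyadicGrid t) (hl : Q.l ≤ Q'.l)
    (hint : (Q.pts ∩ Q'.pts).Nonempty) : Q.pts ⊆ Q'.pts := by
  obtain ⟨k, m, rfl⟩ := hQ
  obtain ⟨k', m', rfl⟩ := hQ'
  obtain ⟨x, hx, hx'⟩ := hint
  obtain ⟨d, rfl⟩ : ∃ d : ℕ, k = k' + d := by
    have := (zpow_le_zpow_iff_right₀ (a := (2:ℝ)) one_lt_two).mp hl
    exact ⟨(k - k').toNat, by omega⟩
  have hscale : (2:ℝ) ^ (-k') = 2 ^ (-(k' + d)) * ((2 ^ d : ℤ) : ℝ) := by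
    rw [Int.cast_pow, Int.cast_ofNat, ← zpow_natCast, ← zpow_add₀ two_ne_zero]
    ring_nf
  simp only [QCube.mem_pts] at hx hx' ⊢
  rw [hscale] at hx' ⊢
  exact fun z hz i => Ico_subset_Ico_of_mem_dyadic (zpow_pos two_pos _) (hx i) (hx' i) (hz i)

theorem two_pow_mul_rpow_mul_rpow_le {a b α δ : ℝ} {r ℓ m : ℕ} (ha : 0 < a)
    (hab : 2 ^ r * (2 ^ ℓ * a) ≤ b) (hδα : δ ≤ α) (hexp : (r + ℓ) * δ + m ≤ r * α) :
    2 ^ m * ((2 ^ ℓ * a) ^ α * b ^ (1 - α)) ≤ a ^ δ * b ^ (1 - δ) := by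
  have hb : 0 < b := lt_of_lt_of_le (by positivity) hab
  have hlog2 : 0 < Real.log 2 := Real.log_pos one_lt_two
  have hlogb : (r + ℓ) * Real.log 2 + Real.log a ≤ Real.log b := by
    have := Real.log_le_log (by positivity) hab
    rwa [Real.log_mul (by positivity) (by positivity), Real.log_mul (by positivity) ha.ne',
      Real.log_pow, Real.log_pow, ← add_assoc, ← add_mul] at this
  -- after taking logarithms: `(m + α ℓ) log 2 ≤ (α - δ) (log b - log a)`
  rw [← Real.log_le_log_iff (by positivity) (by positivity), Real.log_mul (by positivity) (by positivity), Real.log_mul (by positivity) (by positivity),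
    Real.log_mul (by positivity) (by positivity), Real.log_rpow (by positivity),
    Real.log_rpow hb, Real.log_rpow ha, Real.log_rpow hb, Real.log_mul (by positivity) ha.ne',
    Real.log_pow, Real.log_pow]
  linarith [mul_le_mul_of_nonneg_left hlogb (sub_nonneg.mpr hδα),
    mul_le_mul_of_nonneg_right hexp hlog2.le]

theorem rpow_mul_rpow_le_of_le {a b α δ : ℝ} (ha : 0 < a) (hab : a ≤ b) (hδα : δ ≤ α) :
    a ^ α * b ^ (1 - α) ≤ a ^ δ * b ^ (1 - δ) := by
  simpa using two_pow_mul_rpow_mul_rpow_le (r := 0) (ℓ := 0) (m := 0) ha (by simpa using hab)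
    hδα (by simp)

theorem half_rpow_mul_rpow_add_le {a b ε δ : ℝ} {r ℓ : ℕ} (ha : 0 < a)
    (hab : 2 ^ r * (2 ^ ℓ * a) ≤ b) (hδε : δ ≤ ε) (hδ1 : δ ≤ 1)
    (hε : (r + ℓ) * δ + 1 ≤ r * ε) (hr : (r + ℓ) * δ + 2 ≤ r) :
    1 / 2 * (2 ^ ℓ * a) ^ ε * b ^ (1 - ε) + 2 ^ ℓ * a ≤ 1 / 2 * a ^ δ * b ^ (1 - δ) := by
  have h₁ := two_pow_mul_rpow_mul_rpow_le (m := 1) ha hab hδε (by exact_mod_cast hε)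
  have h₂ := two_pow_mul_rpow_mul_rpow_le (m := 2) (α := 1) ha hab hδ1 (by push_cast; linarith)
  simp only [Real.rpow_one, sub_self, Real.rpow_zero, mul_one] at h₂
  linarith

theorem two_rpow_neg_natCast_sub_one {r : ℕ} (hr : 1 ≤ r) :
    (2:ℝ) ^ (-((r - 1 : ℕ) : ℝ)) = 2 * 2 ^ (-(r : ℝ)) := by
  rw [Nat.cast_sub hr, Nat.cast_one, neg_sub, sub_eq_neg_add, Real.rpow_add two_pos,
    Real.rpow_one, mul_comm]

section Goodness

variable {n r : ℕ} {ε δ : ℝ} {t : Fin n → ℝ} {I : QCube n}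

theorem isGood_of_child (hr : 1 ≤ r) (hδ0 : 0 ≤ δ) (hδε : δ ≤ ε) (hI : I ∈ dyadicGrid t)
    (hIgood : isGood t (r - 1) δ I) {J : QCube n} (hJ : J ∈ dyadicGrid t)
    (hJI : J.pts ⊆ I.pts) (hJl : J.l = I.l / 2) : isGood t r ε J := by
  intro K hK hJK hJK_l
  refine ⟨hJK, hJK_l, fun x hx y hy => ?_⟩
  have hJ0 := dyadicGrid.l_pos hJ
  have hK0 := dyadicGrid.l_pos hK
  have hIK_l : I.l ≤ 2 ^ (-((r - 1 : ℕ) : ℝ)) * K.l := by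
    rw [two_rpow_neg_natCast_sub_one hr]; linarith
  have hIK_l' : I.l ≤ K.l := hIK_l.trans <| mul_le_of_le_one_left hK0.le <|
    Real.rpow_le_one_of_one_le_of_nonpos one_le_two (by simp)
  have hIK : I.pts ⊆ K.pts := dyadicGrid.pts_subset_of_le hI hK hIK_l'
    ⟨_, hJI (QCube.corner_mem_pts hJ0), hJK (QCube.corner_mem_pts hJ0)⟩
  calc 1 / 2 * J.l ^ ε * K.l ^ (1 - ε) ≤ 1 / 2 * (J.l ^ δ * K.l ^ (1 - δ)) := by
        rw [mul_assoc]
        exact mul_le_mul_of_nonneg_left (rpow_mul_rpow_le_of_le hJ0 (by linarith) hδε)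
          (by norm_num)
    _ ≤ 1 / 2 * (I.l ^ δ * K.l ^ (1 - δ)) := by
        gcongr
        linarith
    _ ≤ dist x y := by
        rw [← mul_assoc]
        exact (hIgood K hK hIK hIK_l).2.2 x (hJI hx) y hy

theorem isGood_of_ancestor {ℓ : ℕ} (hr : 1 ≤ r) (hδε : δ ≤ ε) (hδ1 : δ ≤ 1)
    (hε : (r + ℓ) * δ + 1 ≤ r * ε) (hr' : (r + ℓ) * δ + 2 ≤ r) (hI : I ∈ dyadicGrid t)
    (hIgood : isGood t (r - 1) δ I) {P : QCube n} (hIP : I.pts ⊆ P.pts)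
    (hPl : P.l = 2 ^ ℓ * I.l) : isGood t r ε P := by
  intro K hK hPK hPK_l
  refine ⟨hPK, hPK_l, fun x hx y hy => ?_⟩
  have hI0 := dyadicGrid.l_pos hI
  have hK0 := dyadicGrid.l_pos hK
  have hIP_l : I.l ≤ P.l := hPl ▸ le_mul_of_one_le_left hI0.le (one_le_pow₀ one_le_two)
  have hIK_l : I.l ≤ 2 ^ (-((r - 1 : ℕ) : ℝ)) * K.l := by
    rw [two_rpow_neg_natCast_sub_one hr]
    have : 0 ≤ (2:ℝ) ^ (-(r : ℝ)) * K.l := by positivity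
    linarith
  have hPK_l' : 2 ^ r * (2 ^ ℓ * I.l) ≤ K.l := by
    rw [← hPl, ← le_inv_mul_iff₀ (by positivity)]
    simpa [Real.rpow_neg, Real.rpow_natCast] using hPK_l
  have hp := QCube.corner_mem_pts hI0
  obtain ⟨i, hi⟩ := QCube.exists_le_abs_sub_of_forall_le_dist
    ((hIgood K hK (hIP.trans hPK) hIK_l).2.2 _ hp) hy
  have hxp := QCube.abs_sub_lt_of_mem_pts hx (hIP hp) i
  calc 1 / 2 * P.l ^ ε * K.l ^ (1 - ε) ≤ 1 / 2 * I.l ^ δ * K.l ^ (1 - δ) - P.l := by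
        rw [hPl]
        linarith [half_rpow_mul_rpow_add_le hI0 hPK_l' hδε hδ1 hε hr']
    _ ≤ |x i - y i| := by
        linarith [abs_sub_le (WithLp.toLp 2 I.a i) (x i) (y i),
          abs_sub_comm (x i) (WithLp.toLp 2 I.a i)]
    _ ≤ dist x y := by
        simpa [Real.dist_eq] using PiLp.dist_apply_le x y i

end Goodness

theorem statement5 (n r τ : ℕ) (ε δ : ℝ) (hr : 3 ≤ r)
    (hε2 : ε < 1 - 1 / (r : ℝ)) (hδ0 : 0 < δ)
    (hδ : δ ≤ ((r : ℝ) * ε - 1) / ((r : ℝ) + (τ : ℝ))) (t : Fin n → ℝ) :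
    ∀ I ∈ dyadicGrid t, isGood t (r - 1) δ I →
      (∀ J ∈ dyadicGrid t, J.pts ⊆ I.pts → J.l = I.l / 2 → isGood t r ε J) ∧
      (∀ ℓ : ℕ, ℓ ≤ τ → ∀ P ∈ dyadicGrid t, I.pts ⊆ P.pts → P.l = 2 ^ ℓ * I.l →
        isGood t r ε P) := by
  intro I hI hIgood
  have hr0 : (0:ℝ) < r := by positivity
  have hδτ : (r + τ) * δ + 1 ≤ r * ε := by
    rw [le_div_iff₀ (by positivity)] at hδ
    linarith
  have hexp : ∀ ℓ : ℕ, ℓ ≤ τ → (r + ℓ) * δ + 1 ≤ r * ε := fun ℓ hℓ => by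
    have : (ℓ : ℝ) * δ ≤ τ * δ := by gcongr
    linarith
  have hrε : r * ε + 1 < r := by
    have := mul_lt_mul_of_pos_left hε2 hr0
    rwa [mul_sub, mul_one_div_cancel hr0.ne', mul_one, lt_sub_iff_add_lt] at this
  have hδε : δ ≤ ε := by
    have : 0 ≤ (τ : ℝ) * δ := by positivity
    exact le_of_mul_le_mul_left (by linarith) hr0
  have hε_lt_one : ε < 1 := by
    have : 0 < 1 / (r : ℝ) := by positivity
    linarith
  refine ⟨fun J hJ hJI hJl => isGood_of_child (by omega) hδ0.le hδε hI hIgood hJ hJI hJl,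
    fun ℓ hℓ P _ hIP hPl => isGood_of_ancestor (by omega) hδε (by linarith) (hexp ℓ hℓ)
      (by linarith [hexp ℓ hℓ]) hI hIgood hIP hPl⟩
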